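/- Let M be a matroid on a finite ground set E with rank function r, and let 𝓒 be a linear class of circuits of M. Then the function r_𝓒 : 2^E → ℤ defined by r_𝓒(S) = r(S) if every circuit of M contained in S belongs to 𝓒, and r_𝓒(S) = r(S) + 1 otherwise, is the rank function of a matroid on E (an elementary lift of M). -/

import Mathlib

/-- The independence axioms for a (finite) matroid given by its collection of
independent sets. -/
def IsMatroidIndep {α : Type*} [DecidableEq α] (Ind : Finset α → Prop) : Prop :=
  Ind ∅ ∧ (∀ ⦃I J : Finset α⦄, Ind J → I ⊆ J → Ind I) ∧
    ∀ ⦃I J : Finset α⦄, Ind I → Ind J → I.card < J.card →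
      ∃ e ∈ J, e ∉ I ∧ Ind (insert e I)

/-- The rank of a set `S`: the largest cardinality of an independent subset of `S`. -/
noncomputable def matroidRank {α : Type*} (Ind : Finset α → Prop) (S : Finset α) : ℕ :=
  sSup {n | ∃ I ⊆ S, Ind I ∧ I.card = n}

/-- A circuit: a minimal dependent set. -/
def IsCircuit {α : Type*} (Ind : Finset α → Prop) (C : Finset α) : Prop :=
  ¬ Ind C ∧ ∀ C' ⊂ C, Ind C'

/-- `S` is `𝓒`-balanced: every circuit contained in `S` belongs to `𝓒`. -/
def CBalanced {α : Type*} (Ind : Finset α → Prop) (𝓒 : Set (Finset α)) (S : Finset α) : Prop :=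
  ∀ C ⊆ S, IsCircuit Ind C → C ∈ 𝓒

/-!
The independent sets of the lift are the independent sets of `M` together with the unbalanced
sets of nullity one. The only delicate axiom is augmentation from an independent `I` into an
unbalanced `J`: one has to show that if every `e ∈ J \ I` is spanned by `I` with `I ∪ {e}`
balanced, then `J` is balanced after all. For two such elements `e, f`, the fundamental circuits
of `e` and `f` lie in `𝓒` and their union has nullity two, so linearity makes `I ∪ {e, f}`
balanced. A circuit `C ⊆ J` is then handled by induction on `|C \ I|`, exchanging elements of
`C \ I` into `I`.
-/

section

variable {α : Type*} {Ind : Finset α → Prop} {𝓒 : Set (Finset α)}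
  {I J S T C C₁ C₂ : Finset α} {e f x : α}

lemma bddAbove_card_indep_subset (S : Finset α) :
    BddAbove {n | ∃ I ⊆ S, Ind I ∧ I.card = n} := by
  refine ⟨S.card, ?_⟩
  rintro n ⟨I, hIS, -, rfl⟩
  exact Finset.card_le_card hIS

lemma card_le_matroidRank (hI : Ind I) (hIS : I ⊆ S) : I.card ≤ matroidRank Ind S :=
  le_csSup (bddAbove_card_indep_subset S) ⟨I, hIS, hI, rfl⟩

lemma matroidRank_le {n : ℕ} (h : ∀ I ⊆ S, Ind I → I.card ≤ n) : matroidRank Ind S ≤ n :=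
  csSup_le' <| by rintro _ ⟨I, hIS, hI, rfl⟩; exact h I hIS hI

lemma matroidRank_le_card (S : Finset α) : matroidRank Ind S ≤ S.card :=
  matroidRank_le fun _ hIS _ => Finset.card_le_card hIS

lemma matroidRank_mono (hST : S ⊆ T) : matroidRank Ind S ≤ matroidRank Ind T :=
  matroidRank_le fun _ hIS hI => card_le_matroidRank hI (hIS.trans hST)

lemma matroidRank_eq_card_of_indep (hI : Ind I) : matroidRank Ind I = I.card :=
  (matroidRank_le_card I).antisymm (card_le_matroidRank hI subset_rfl)

lemma matroidRank_le_matroidRank_of_imp {Ind' : Finset α → Prop} (h : ∀ I, Ind I → Ind' I)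
    (S : Finset α) : matroidRank Ind S ≤ matroidRank Ind' S :=
  matroidRank_le fun _ hIS hI => card_le_matroidRank (h _ hI) hIS

lemma IsCircuit.eq_of_subset (h₁ : IsCircuit Ind C₁) (h₂ : IsCircuit Ind C₂) (h : C₁ ⊆ C₂) :
    C₁ = C₂ :=
  h.eq_or_ssubset.resolve_right fun hlt => h₁.1 (h₂.2 _ hlt)

lemma CBalanced.subset (hT : CBalanced Ind 𝓒 T) (hST : S ⊆ T) : CBalanced Ind 𝓒 S :=
  fun C hCS hC => hT C (hCS.trans hST) hC

def LiftIndep (Ind : Finset α → Prop) (𝓒 : Set (Finset α)) (S : Finset α) : Prop :=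
  Ind S ∨ (matroidRank Ind S + 1 = S.card ∧ ¬ CBalanced Ind 𝓒 S)

lemma LiftIndep.card_le (h : LiftIndep Ind 𝓒 S) : S.card ≤ matroidRank Ind S + 1 := by
  rcases h with h | ⟨h, -⟩
  · rw [matroidRank_eq_card_of_indep h]; omega
  · omega

lemma matroidRank_liftIndep_of_cBalanced (hS : CBalanced Ind 𝓒 S) :
    matroidRank (LiftIndep Ind 𝓒) S = matroidRank Ind S :=
  (matroidRank_le fun _ hIS hI =>
      card_le_matroidRank (hI.resolve_right fun h => h.2 (hS.subset hIS)) hIS).antisymm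
    (matroidRank_le_matroidRank_of_imp (fun _ => Or.inl) S)

variable [DecidableEq α]

lemma notMem_of_not_indep_insert (hI : Ind I) (he : ¬ Ind (insert e I)) : e ∉ I :=
  fun heI => he (by rwa [Finset.insert_eq_of_mem heI])

lemma IsCircuit.indep_erase (hC : IsCircuit Ind C) (hx : x ∈ C) : Ind (C.erase x) :=
  hC.2 _ (Finset.erase_ssubset hx)

namespace IsMatroidIndep

lemma indep_empty (hM : IsMatroidIndep Ind) : Ind ∅ := hM.1

lemma indep_of_subset (hM : IsMatroidIndep Ind) (hJ : Ind J) (hIJ : I ⊆ J) : Ind I :=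
  hM.2.1 hJ hIJ

lemma exists_insert_of_card_lt (hM : IsMatroidIndep Ind) (hI : Ind I) (hJ : Ind J)
    (h : I.card < J.card) : ∃ e ∈ J, e ∉ I ∧ Ind (insert e I) :=
  hM.2.2 hI hJ h

lemma exists_subset_card_eq_matroidRank (hM : IsMatroidIndep Ind) (S : Finset α) :
    ∃ I ⊆ S, Ind I ∧ I.card = matroidRank Ind S :=
  Nat.sSup_mem (s := {n | ∃ I ⊆ S, Ind I ∧ I.card = n})
    ⟨0, ∅, Finset.empty_subset S, hM.indep_empty, rfl⟩ (bddAbove_card_indep_subset S)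

lemma indep_of_matroidRank_eq_card (hM : IsMatroidIndep Ind)
    (h : matroidRank Ind S = S.card) : Ind S := by
  obtain ⟨I, hIS, hI, hIcard⟩ := hM.exists_subset_card_eq_matroidRank S
  rwa [← Finset.eq_of_subset_of_card_le hIS (hIcard.trans h).ge]

lemma exists_indep_superset_card_eq_matroidRank (hM : IsMatroidIndep Ind) {I : Finset α}
    (hI : Ind I) (hIS : I ⊆ S) : ∃ B, I ⊆ B ∧ B ⊆ S ∧ Ind B ∧ B.card = matroidRank Ind S := by
  obtain hlt | heq := (card_le_matroidRank hI hIS).lt_or_eq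
  · obtain ⟨J, hJS, hJ, hJcard⟩ := hM.exists_subset_card_eq_matroidRank S
    obtain ⟨e, heJ, heI, hins⟩ := hM.exists_insert_of_card_lt hI hJ (hJcard ▸ hlt)
    have hcard : (insert e I).card = I.card + 1 := Finset.card_insert_of_notMem heI
    obtain ⟨B, hIB, hBS, hB, hBcard⟩ :=
      hM.exists_indep_superset_card_eq_matroidRank hins (Finset.insert_subset (hJS heJ) hIS)
    exact ⟨B, (Finset.subset_insert e I).trans hIB, hBS, hB, hBcard⟩
  · exact ⟨I, subset_rfl, hIS, hI, heq⟩
termination_by matroidRank Ind S - I.card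

lemma matroidRank_union_add_matroidRank_inter_le (hM : IsMatroidIndep Ind) (S T : Finset α) :
    matroidRank Ind (S ∪ T) + matroidRank Ind (S ∩ T) ≤ matroidRank Ind S + matroidRank Ind T := by
  obtain ⟨I, hIST, hI, hIcard⟩ := hM.exists_subset_card_eq_matroidRank (S ∩ T)
  obtain ⟨B, hIB, hBST, hB, hBcard⟩ := hM.exists_indep_superset_card_eq_matroidRank hI
    (hIST.trans Finset.inter_subset_union)
  have hS := card_le_matroidRank (hM.indep_of_subset hB Finset.inter_subset_left)
    (Finset.inter_subset_right : B ∩ S ⊆ S)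
  have hT := card_le_matroidRank (hM.indep_of_subset hB Finset.inter_subset_left)
    (Finset.inter_subset_right : B ∩ T ⊆ T)
  have hunion : B ∩ S ∪ B ∩ T = B := by
    rw [← Finset.inter_union_distrib_left, Finset.inter_eq_left.2 hBST]
  have hinter : B ∩ S ∩ (B ∩ T) = B ∩ (S ∩ T) := by rw [← Finset.inter_inter_distrib_left]
  have hcard := Finset.card_union_add_card_inter (B ∩ S) (B ∩ T)
  rw [hunion, hinter] at hcard
  have hI' := Finset.card_le_card (Finset.subset_inter hIB hIST)
  omega

lemma matroidRank_add_card_le_of_subset (hM : IsMatroidIndep Ind) (hST : S ⊆ T) :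
    matroidRank Ind T + S.card ≤ matroidRank Ind S + T.card := by
  obtain ⟨I, hIT, hI, hIcard⟩ := hM.exists_subset_card_eq_matroidRank T
  have hinter := card_le_matroidRank (hM.indep_of_subset hI Finset.inter_subset_left)
    (Finset.inter_subset_right : I ∩ S ⊆ S)
  have hdiff := Finset.card_le_card (Finset.sdiff_subset_sdiff hIT (subset_refl S))
  have := Finset.card_sdiff_add_card_inter I S
  have := Finset.card_sdiff_add_card_eq_card hST
  omega

lemma matroidRank_insert_eq_of_subset (hM : IsMatroidIndep Ind) (hST : S ⊆ T)
    (h : matroidRank Ind (insert x S) = matroidRank Ind S) :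
    matroidRank Ind (insert x T) = matroidRank Ind T := by
  have hsub := hM.matroidRank_union_add_matroidRank_inter_le (insert x S) T
  rw [Finset.insert_union, Finset.union_eq_right.2 hST] at hsub
  have := matroidRank_mono (Ind := Ind) (Finset.subset_inter (Finset.subset_insert x S) hST)
  have := matroidRank_mono (Ind := Ind) (Finset.subset_insert x T)
  omega

lemma matroidRank_insert_of_not_indep (hM : IsMatroidIndep Ind) (hI : Ind I)
    (he : ¬ Ind (insert e I)) : matroidRank Ind (insert e I) = I.card := by
  have hlow := card_le_matroidRank hI (Finset.subset_insert e I)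
  have hup := matroidRank_le_card (Ind := Ind) (insert e I)
  have hne : matroidRank Ind (insert e I) ≠ (insert e I).card :=
    fun h => he (hM.indep_of_matroidRank_eq_card h)
  rw [Finset.card_insert_of_notMem (notMem_of_not_indep_insert hI he)] at hup hne
  omega

lemma matroidRank_insert_insert_of_not_indep (hM : IsMatroidIndep Ind) (hI : Ind I)
    (he : ¬ Ind (insert e I)) (hf : ¬ Ind (insert f I)) :
    matroidRank Ind (insert e (insert f I)) = I.card := by
  rw [hM.matroidRank_insert_eq_of_subset (Finset.subset_insert f I)
    (by rw [hM.matroidRank_insert_of_not_indep hI he, matroidRank_eq_card_of_indep hI]),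
    hM.matroidRank_insert_of_not_indep hI hf]

lemma exists_isCircuit_subset (hM : IsMatroidIndep Ind) {S : Finset α} (hS : ¬ Ind S) :
    ∃ C ⊆ S, IsCircuit Ind C := by
  by_cases hmin : ∀ T ⊂ S, Ind T
  · exact ⟨S, subset_rfl, hS, hmin⟩
  push Not at hmin
  obtain ⟨T, hTS, hT⟩ := hmin
  have := Finset.card_lt_card hTS
  obtain ⟨C, hCT, hC⟩ := hM.exists_isCircuit_subset hT
  exact ⟨C, hCT.trans hTS.subset, hC⟩
termination_by S.card

/-- The fundamental circuit of `e` with respect to `I`. -/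
lemma exists_isCircuit_mem_of_not_indep_insert (hM : IsMatroidIndep Ind) (hI : Ind I)
    (he : ¬ Ind (insert e I)) : ∃ C ⊆ insert e I, IsCircuit Ind C ∧ e ∈ C := by
  obtain ⟨C, hCI, hC⟩ := hM.exists_isCircuit_subset he
  refine ⟨C, hCI, hC, by_contra fun heC => hC.1 (hM.indep_of_subset hI ?_)⟩
  exact (Finset.subset_insert_iff_of_notMem heC).1 hCI

end IsMatroidIndep

namespace IsCircuit

lemma nonempty (hM : IsMatroidIndep Ind) (hC : IsCircuit Ind C) : C.Nonempty :=
  Finset.nonempty_iff_ne_empty.2 fun h => hC.1 (h ▸ hM.indep_empty)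

lemma matroidRank_add_one (hM : IsMatroidIndep Ind) (hC : IsCircuit Ind C) :
    matroidRank Ind C + 1 = C.card := by
  obtain ⟨x, hx⟩ := hC.nonempty hM
  have hlow := card_le_matroidRank (hC.indep_erase hx) (Finset.erase_subset x C)
  have hup := matroidRank_le_card (Ind := Ind) C
  have hne : matroidRank Ind C ≠ C.card := fun h => hC.1 (hM.indep_of_matroidRank_eq_card h)
  have := Finset.card_erase_of_mem hx
  have := Finset.card_pos.2 ⟨x, hx⟩
  omega

lemma matroidRank_erase (hM : IsMatroidIndep Ind) (hC : IsCircuit Ind C) (hx : x ∈ C)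
    (hCS : C ⊆ S) : matroidRank Ind (S.erase x) = matroidRank Ind S := by
  have hCx : matroidRank Ind (insert x (C.erase x)) = matroidRank Ind (C.erase x) := by
    rw [Finset.insert_erase hx, matroidRank_eq_card_of_indep (hC.indep_erase hx),
      Finset.card_erase_of_mem hx]
    have := hC.matroidRank_add_one hM
    omega
  have := hM.matroidRank_insert_eq_of_subset (Finset.erase_subset_erase x hCS) hCx
  rwa [Finset.insert_erase (hCS hx), eq_comm] at this

lemma matroidRank_union_add_two_le (hM : IsMatroidIndep Ind) (h₁ : IsCircuit Ind C₁)
    (h₂ : IsCircuit Ind C₂) (hne : C₁ ≠ C₂) :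
    matroidRank Ind (C₁ ∪ C₂) + 2 ≤ (C₁ ∪ C₂).card := by
  have hinter : Ind (C₁ ∩ C₂) := h₁.2 _ <| Finset.inter_subset_left.ssubset_of_ne fun h =>
    hne (h₁.eq_of_subset h₂ (Finset.inter_eq_left.1 h))
  have := matroidRank_eq_card_of_indep hinter
  have := hM.matroidRank_union_add_matroidRank_inter_le C₁ C₂
  have := h₁.matroidRank_add_one hM
  have := h₂.matroidRank_add_one hM
  have := Finset.card_union_add_card_inter C₁ C₂
  omega

lemma eq_of_subset_of_matroidRank_add_one_eq_card (hM : IsMatroidIndep Ind)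
    (h₁ : IsCircuit Ind C₁) (h₂ : IsCircuit Ind C₂) (hS : matroidRank Ind S + 1 = S.card)
    (hC₁S : C₁ ⊆ S) (hC₂S : C₂ ⊆ S) : C₁ = C₂ := by
  by_contra hne
  have := h₁.matroidRank_union_add_two_le hM h₂ hne
  have := hM.matroidRank_add_card_le_of_subset (Finset.union_subset hC₁S hC₂S)
  omega

end IsCircuit

def IsLinearClass (Ind : Finset α → Prop) (𝓒 : Set (Finset α)) : Prop :=
  ∀ C₁ ∈ 𝓒, ∀ C₂ ∈ 𝓒, (matroidRank Ind (C₁ ∪ C₂) : ℤ) = (C₁ ∪ C₂).card - 2 →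
    ∀ C₃ : Finset α, IsCircuit Ind C₃ → C₃ ⊆ C₁ ∪ C₂ → C₃ ∈ 𝓒

namespace IsLinearClass

lemma cBalanced_insert_insert (hM : IsMatroidIndep Ind) (h𝓒 : IsLinearClass Ind 𝓒)
    (hI : Ind I) (he : ¬ Ind (insert e I)) (hf : ¬ Ind (insert f I))
    (hbe : CBalanced Ind 𝓒 (insert e I)) (hbf : CBalanced Ind 𝓒 (insert f I)) :
    CBalanced Ind 𝓒 (insert e (insert f I)) := by
  obtain rfl | hef := eq_or_ne e f
  · rwa [Finset.insert_idem]
  obtain ⟨Ce, hCeI, hCe, -⟩ := hM.exists_isCircuit_mem_of_not_indep_insert hI he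
  obtain ⟨Cf, hCfI, hCf, hfCf⟩ := hM.exists_isCircuit_mem_of_not_indep_insert hI hf
  have hfI := notMem_of_not_indep_insert hI hf
  have hne : Ce ≠ Cf := by
    rintro rfl
    rcases Finset.mem_insert.1 (hCeI hfCf) with h | h
    exacts [hef h.symm, hfI h]
  set W := insert e (insert f I)
  have hWrank : matroidRank Ind W = I.card := hM.matroidRank_insert_insert_of_not_indep hI he hf
  have hWcard : W.card = I.card + 2 := by
    rw [Finset.card_insert_of_notMem, Finset.card_insert_of_notMem hfI]
    simpa [hef] using notMem_of_not_indep_insert hI he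
  have hCeW : Ce ⊆ W := hCeI.trans (Finset.insert_subset_insert e (Finset.subset_insert f I))
  have hCfW : Cf ⊆ W := hCfI.trans (Finset.subset_insert e _)
  have hnullity : matroidRank Ind (Ce ∪ Cf) + 2 = (Ce ∪ Cf).card := by
    have := hCe.matroidRank_union_add_two_le hM hCf hne
    have := hM.matroidRank_add_card_le_of_subset (Finset.union_subset hCeW hCfW)
    omega
  intro D hDW hD
  refine h𝓒 Ce (hbe Ce hCeI hCe) Cf (hbf Cf hCfI hCf) (by push_cast [← hnullity]; ring) D hD ?_
  -- Outside `Ce ∪ Cf`, an element `y` of `D` would leave `W.erase y` of nullity one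
  -- containing the two circuits `Ce ≠ Cf`.
  intro y hyD
  by_contra hy
  have hsub : ∀ C ⊆ Ce ∪ Cf, C ⊆ W.erase y := fun C hC a ha =>
    Finset.mem_erase.2 ⟨fun h => hy (h ▸ hC ha), Finset.union_subset hCeW hCfW (hC ha)⟩
  refine hne (hCe.eq_of_subset_of_matroidRank_add_one_eq_card hM hCf ?_
    (hsub Ce Finset.subset_union_left) (hsub Cf Finset.subset_union_right))
  rw [hD.matroidRank_erase hM hyD hDW, Finset.card_erase_of_mem (hDW hyD)]
  omega

theorem mem_of_isCircuit (hM : IsMatroidIndep Ind) (h𝓒 : IsLinearClass Ind 𝓒) {I : Finset α}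
    (hI : Ind I) (hC : IsCircuit Ind C)
    (hCI : ∀ e ∈ C \ I, ¬ Ind (insert e I) ∧ CBalanced Ind 𝓒 (insert e I)) : C ∈ 𝓒 := by
  obtain ⟨e, he⟩ : (C \ I).Nonempty :=
    Finset.sdiff_nonempty.2 fun h => hC.1 (hM.indep_of_subset hI h)
  obtain ⟨hdep, hbal⟩ := hCI e he
  by_cases hCeI : C ⊆ insert e I
  · exact hbal C hCeI hC
  -- Exchange `e` into `I` against an element `x` of its fundamental circuit outside `C`;
  -- this removes `e` from `C \ I`.
  obtain ⟨f, hfC, hfeI⟩ := Finset.not_subset.1 hCeI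
  obtain ⟨Ce, hCeI', hCe, -⟩ := hM.exists_isCircuit_mem_of_not_indep_insert hI hdep
  obtain ⟨x, hxCe, hxC⟩ : ∃ x ∈ Ce, x ∉ C := by
    by_contra! hCeC
    exact hfeI ((hCe.eq_of_subset hC hCeC ▸ hCeI') hfC)
  set I' := (insert e I).erase x
  have hI'card : I'.card = I.card := by
    rw [Finset.card_erase_of_mem (hCeI' hxCe),
      Finset.card_insert_of_notMem (Finset.mem_sdiff.1 he).2, Nat.add_sub_cancel]
  have hI' : Ind I' := hM.indep_of_matroidRank_eq_card <| by
    rw [hCe.matroidRank_erase hM hxCe hCeI', hM.matroidRank_insert_of_not_indep hI hdep, hI'card]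
  have hCI' : C \ I' ⊆ (C \ I).erase e := by
    intro a ha
    obtain ⟨haC, haI'⟩ := Finset.mem_sdiff.1 ha
    have haeI : a ∉ insert e I := fun h => haI' (Finset.mem_erase.2 ⟨fun hax => hxC (hax ▸ haC), h⟩)
    rw [Finset.mem_insert, not_or] at haeI
    exact Finset.mem_erase.2 ⟨haeI.1, Finset.mem_sdiff.2 ⟨haC, haeI.2⟩⟩
  have : (C \ I').card < (C \ I).card :=
    (Finset.card_le_card hCI').trans_lt (Finset.card_erase_lt_of_mem he)
  refine h𝓒.mem_of_isCircuit hM hI' hC fun g hg => ?_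
  obtain ⟨-, hgCI⟩ := Finset.mem_erase.1 (hCI' hg)
  obtain ⟨hgdep, hgbal⟩ := hCI g hgCI
  have hsub : insert g I' ⊆ insert g (insert e I) :=
    Finset.insert_subset_insert g (Finset.erase_subset x _)
  refine ⟨fun hind => ?_, (h𝓒.cBalanced_insert_insert hM hI hgdep hdep hgbal hbal).subset hsub⟩
  have := card_le_matroidRank hind hsub
  rw [hM.matroidRank_insert_insert_of_not_indep hI hgdep hdep,
    Finset.card_insert_of_notMem (Finset.mem_sdiff.1 hg).2, hI'card] at this
  omega
termination_by (C \ I).card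

lemma cBalanced_of_forall_insert (hM : IsMatroidIndep Ind) (h𝓒 : IsLinearClass Ind 𝓒)
    (hI : Ind I) (h : ∀ e ∈ S \ I, ¬ Ind (insert e I) ∧ CBalanced Ind 𝓒 (insert e I)) :
    CBalanced Ind 𝓒 S :=
  fun _ hCS hC => h𝓒.mem_of_isCircuit hM hI hC fun e he =>
    h e (Finset.sdiff_subset_sdiff hCS subset_rfl he)

end IsLinearClass

namespace LiftIndep

lemma subset (hM : IsMatroidIndep Ind) (hJ : LiftIndep Ind 𝓒 J) (hIJ : I ⊆ J) :
    LiftIndep Ind 𝓒 I := by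
  rcases hJ with hJ | ⟨hJr, hJb⟩
  · exact Or.inl (hM.indep_of_subset hJ hIJ)
  by_cases hI : Ind I
  · exact Or.inl hI
  refine Or.inr ⟨?_, fun hIb => ?_⟩
  · have := hM.matroidRank_add_card_le_of_subset hIJ
    have := matroidRank_le_card (Ind := Ind) I
    have : matroidRank Ind I ≠ I.card := fun h => hI (hM.indep_of_matroidRank_eq_card h)
    omega
  · -- `J` has nullity one, so its unique circuit is both the bad circuit of `J` and one inside `I`.
    obtain ⟨D, hDI, hD⟩ := hM.exists_isCircuit_subset hI
    simp only [CBalanced, not_forall] at hJb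
    obtain ⟨C, hCJ, hC, hC𝓒⟩ := hJb
    exact hC𝓒 (hD.eq_of_subset_of_matroidRank_add_one_eq_card hM hC hJr (hDI.trans hIJ) hCJ ▸
      hIb D hDI hD)

lemma exists_insert_of_not_indep (hM : IsMatroidIndep Ind) (hI : LiftIndep Ind 𝓒 I)
    (hIdep : ¬ Ind I) (hJ : LiftIndep Ind 𝓒 J) (hcard : I.card < J.card) :
    ∃ e ∈ J, e ∉ I ∧ LiftIndep Ind 𝓒 (insert e I) := by
  obtain ⟨hIr, hIb⟩ := hI.resolve_left hIdep
  obtain ⟨B, hBI, hB, hBcard⟩ := hM.exists_subset_card_eq_matroidRank I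
  obtain ⟨B', hB'J, hB', hB'card⟩ := hM.exists_subset_card_eq_matroidRank J
  have := hJ.card_le
  obtain ⟨e, heB', heB, hind⟩ := hM.exists_insert_of_card_lt hB hB' (by omega)
  have hBe := Finset.card_insert_of_notMem heB
  have heI : e ∉ I := fun heI => by
    have := card_le_matroidRank hind (Finset.insert_subset heI hBI)
    omega
  refine ⟨e, hB'J heB', heI, Or.inr ⟨?_, fun hb => hIb (hb.subset (Finset.subset_insert e I))⟩⟩
  have hlow := card_le_matroidRank hind (Finset.insert_subset_insert e hBI)
  have hup := matroidRank_le_card (Ind := Ind) (insert e I)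
  have hne : matroidRank Ind (insert e I) ≠ (insert e I).card := fun h =>
    hIdep (hM.indep_of_subset (hM.indep_of_matroidRank_eq_card h) (Finset.subset_insert e I))
  rw [Finset.card_insert_of_notMem heI] at hup hne ⊢
  omega

end LiftIndep

namespace IsLinearClass

lemma exists_liftIndep_insert (hM : IsMatroidIndep Ind) (h𝓒 : IsLinearClass Ind 𝓒) (hI : Ind I)
    (hS : ¬ CBalanced Ind 𝓒 S) : ∃ e ∈ S, e ∉ I ∧ LiftIndep Ind 𝓒 (insert e I) := by
  by_contra! h
  refine hS (h𝓒.cBalanced_of_forall_insert hM hI fun e he => ?_)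
  obtain ⟨heS, heI⟩ := Finset.mem_sdiff.1 he
  have hdep : ¬ Ind (insert e I) := fun hind => h e heS heI (Or.inl hind)
  refine ⟨hdep, by_contra fun hbal => h e heS heI (Or.inr ⟨?_, hbal⟩)⟩
  rw [hM.matroidRank_insert_of_not_indep hI hdep, Finset.card_insert_of_notMem heI]

theorem isMatroidIndep_liftIndep (hM : IsMatroidIndep Ind) (h𝓒 : IsLinearClass Ind 𝓒) :
    IsMatroidIndep (LiftIndep Ind 𝓒) := by
  refine ⟨Or.inl hM.indep_empty, fun I J hJ hIJ => hJ.subset hM hIJ, fun I J hI hJ hcard => ?_⟩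
  by_cases hIind : Ind I
  · rcases hJ with hJ | ⟨-, hJb⟩
    · obtain ⟨e, heJ, heI, hins⟩ := hM.exists_insert_of_card_lt hIind hJ hcard
      exact ⟨e, heJ, heI, Or.inl hins⟩
    · exact h𝓒.exists_liftIndep_insert hM hIind hJb
  · exact hI.exists_insert_of_not_indep hM hIind hJ hcard

lemma matroidRank_liftIndep_of_not_cBalanced (hM : IsMatroidIndep Ind)
    (h𝓒 : IsLinearClass Ind 𝓒) (hS : ¬ CBalanced Ind 𝓒 S) :
    matroidRank (LiftIndep Ind 𝓒) S = matroidRank Ind S + 1 := by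
  refine (matroidRank_le fun I hIS hI => ?_).antisymm ?_
  · have := matroidRank_mono (Ind := Ind) hIS
    have := hI.card_le
    omega
  obtain ⟨B, hBS, hB, hBcard⟩ := hM.exists_subset_card_eq_matroidRank S
  obtain ⟨e, heS, heB, hlift⟩ := h𝓒.exists_liftIndep_insert hM hB hS
  calc matroidRank Ind S + 1 = (insert e B).card := by rw [Finset.card_insert_of_notMem heB, hBcard]
    _ ≤ matroidRank (LiftIndep Ind 𝓒) S := card_le_matroidRank hlift (Finset.insert_subset heS hBS)

end IsLinearClass

end

theorem linear_class_lift_rank_general {E : Type*} [DecidableEq E]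
    (Ind : Finset E → Prop) (hM : IsMatroidIndep Ind)
    (𝓒 : Set (Finset E))
    (h𝓒lin : ∀ C₁ ∈ 𝓒, ∀ C₂ ∈ 𝓒,
      (matroidRank Ind (C₁ ∪ C₂) : ℤ) = (C₁ ∪ C₂).card - 2 →
      ∀ C₃ : Finset E, IsCircuit Ind C₃ → C₃ ⊆ C₁ ∪ C₂ → C₃ ∈ 𝓒) :
    ∃ Ind' : Finset E → Prop, IsMatroidIndep Ind' ∧
      ∀ S : Finset E,
        (CBalanced Ind 𝓒 S → matroidRank Ind' S = matroidRank Ind S) ∧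
        (¬ CBalanced Ind 𝓒 S → matroidRank Ind' S = matroidRank Ind S + 1) :=
  ⟨LiftIndep Ind 𝓒, IsLinearClass.isMatroidIndep_liftIndep hM h𝓒lin, fun _ =>
    ⟨matroidRank_liftIndep_of_cBalanced,
      IsLinearClass.matroidRank_liftIndep_of_not_cBalanced hM h𝓒lin⟩⟩

/-- given a linear class `𝓒` of circuits of a matroid `M`, the function
`r_𝓒(S) = r(S)` if `S` is `𝓒`-balanced and `r(S) + 1` otherwise is the rank function
of a matroid on `E` (an elementary lift of `M`). -/
theorem linear_class_lift_rank {E : Type*} [Fintype E] [DecidableEq E]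
    (Ind : Finset E → Prop) (hM : IsMatroidIndep Ind)
    (𝓒 : Set (Finset E)) (h𝓒circ : ∀ C ∈ 𝓒, IsCircuit Ind C)
    (h𝓒lin : ∀ C₁ ∈ 𝓒, ∀ C₂ ∈ 𝓒,
      (matroidRank Ind (C₁ ∪ C₂) : ℤ) = (C₁ ∪ C₂).card - 2 →
      ∀ C₃ : Finset E, IsCircuit Ind C₃ → C₃ ⊆ C₁ ∪ C₂ → C₃ ∈ 𝓒) :
    ∃ Ind' : Finset E → Prop, IsMatroidIndep Ind' ∧
      ∀ S : Finset E,
        (CBalanced Ind 𝓒 S → matroidRank Ind' S = matroidRank Ind S) ∧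
        (¬ CBalanced Ind 𝓒 S → matroidRank Ind' S = matroidRank Ind S + 1) :=
  linear_class_lift_rank_general Ind hM 𝓒 h𝓒lin
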